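/- arXiv:1801.04809 — 4 statements merged into one kernel-verified Lean document; each statement's English description precedes it below -/
import Mathlib

section
/- Let P and Q be Motzkin paths of the same size n. If P ≤_M Q in the Tamari-type partial order on Motzkin paths, then cls(P) = cls(Q), i.e., P and Q have the same sequence of heights of diagonal steps. -/
/-- Steps: north `N = (0,1)`, east `E = (1,0)`, diagonal `D = (1,1)`. -/
inductive MStep : Type
  | N | E | D
  deriving DecidableEq

/-- The contribution of a step to the height `y - x` above the diagonal. -/
def MStep.hdiff : MStep → ℤ
  | .N => 1
  | .E => -1
  | .D => 0

/-- The total height change `y - x` along a word of steps. -/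
def wsum (p : List MStep) : ℤ := (p.map MStep.hdiff).sum

/-- A (nonempty) Motzkin path: starts at the origin, never goes below the
diagonal `y = x`, and ends on the diagonal. -/
def IsMotzkin (p : List MStep) : Prop :=
  p ≠ [] ∧ (∀ q, q <+: p → 0 ≤ wsum q) ∧ wsum p = 0

/-- A Dyck path is a Motzkin path with no diagonal step. -/
def IsDyck (p : List MStep) : Prop := IsMotzkin p ∧ MStep.D ∉ p

/-- A path is primitive if it touches the diagonal only at its endpoints. -/
def IsPrimitive (p : List MStep) : Prop :=
  IsMotzkin p ∧ ∀ q, q <+: p → q ≠ [] → q ≠ p → 0 < wsum q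

/-- Covering relation for the Tamari-type order on Motzkin paths:
`Q` covers `P` iff `P = P₁·E·P₂·P₃` and `Q = P₁·P₂·E·P₃` with `P₂` a nonempty
primitive Motzkin path. -/
def MCover (P Q : List MStep) : Prop :=
  ∃ P₁ P₂ P₃ : List MStep, IsMotzkin P₂ ∧ IsPrimitive P₂ ∧
    P = P₁ ++ [MStep.E] ++ P₂ ++ P₃ ∧ Q = P₁ ++ P₂ ++ [MStep.E] ++ P₃

/-- Covering relation of the Tamari order on Dyck paths. -/
def DCover (P Q : List MStep) : Prop :=
  ∃ P₁ P₂ P₃ : List MStep, IsDyck P₂ ∧ IsPrimitive P₂ ∧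
    P = P₁ ++ [MStep.E] ++ P₂ ++ P₃ ∧ Q = P₁ ++ P₂ ++ [MStep.E] ++ P₃

/-- The partial order `≤_M` on Motzkin paths. -/
def MLE : List MStep → List MStep → Prop := Relation.ReflTransGen MCover

/-- The Tamari order `≤_D` on Dyck paths. -/
def DLE : List MStep → List MStep → Prop := Relation.ReflTransGen DCover

/-- Heights of the diagonal steps along a path, starting from height `h`. -/
def clsFrom : List MStep → ℤ → List ℤ
  | [], _ => []
  | .N :: rest, h => clsFrom rest (h + 1)
  | .E :: rest, h => clsFrom rest h
  | .D :: rest, h => (h + 1) :: clsFrom rest (h + 1)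

/-- The class of a Motzkin path: the sequence of heights (ending `y`-coordinates)
of its diagonal steps, in the order they occur. -/
def cls (p : List MStep) : List ℤ := clsFrom p 0

/-- A path avoids `NNN` if it has no three consecutive north steps. -/
def AvoidsNNN (p : List MStep) : Prop := ¬ ([MStep.N, MStep.N, MStep.N] <:+: p)

/-- Callan's bijection `φ`: replace each factor `NE` by `D` and each factor
`NNE` by `N`, leaving remaining east steps unchanged. -/
def phi : List MStep → List MStep
  | [] => []
  | .N :: .N :: .E :: rest => .N :: phi rest
  | .N :: .E :: rest => .D :: phi rest
  | s :: rest => s :: phi rest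

/-- The inverse of `φ`: replace each `D` by `NE` and each `N` by `NNE`. -/
def psi : List MStep → List MStep
  | [] => []
  | .N :: rest => .N :: .N :: .E :: psi rest
  | .D :: rest => .N :: .E :: psi rest
  | .E :: rest => .E :: psi rest

/-- For each north step of the path (in order), record `N` if it is immediately
followed by an east step and `E` otherwise. -/
def typeRaw : List MStep → List MStep
  | [] => []
  | .N :: rest => (if rest.head? = some MStep.E then MStep.N else MStep.E) :: typeRaw rest
  | _ :: rest => typeRaw rest

/-- The type of a Dyck path of length `2n`: the word of length `n - 1` whose
`i`-th letter is `N` iff the `i`-th north step is immediately followed by an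
east step (the letter of the last north step is dropped). -/
def typeW (p : List MStep) : List MStep := (typeRaw p).dropLast

/-- `ds p` is the number of north steps of `p` that are neither immediately
preceded nor immediately followed by another north step. -/
def ds (p : List MStep) : ℕ :=
  ((Finset.range p.length).filter (fun i =>
    p[i]? = some MStep.N ∧ p[i + 1]? ≠ some MStep.N ∧
      (i = 0 ∨ p[i - 1]? ≠ some MStep.N))).card

/-- The number of contacts of a path with the diagonal `y = x` (lattice points
of the path lying on the diagonal, endpoints included). -/
def cont (p : List MStep) : ℕ :=
  ((Finset.range (p.length + 1)).filter (fun i => wsum (p.take i) = 0)).card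

/-
An east step leaves the `y`-coordinate unchanged, so moving it past `P₂` does not change the
height at which any diagonal step ends. Hence the class is invariant under each covering move,
and so along every chain of them.
-/

def MStep.dy : MStep → ℤ
  | .N => 1
  | .E => 0
  | .D => 1

lemma clsFrom_append (a b : List MStep) (h : ℤ) :
    clsFrom (a ++ b) h = clsFrom a h ++ clsFrom b (h + (a.map MStep.dy).sum) := by
  induction a generalizing h with
  | nil => simp [clsFrom]
  | cons s rest ih =>
    cases s <;> simp [clsFrom, MStep.dy, ih, add_assoc]

lemma clsFrom_append_E_comm (a b : List MStep) (h : ℤ) :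
    clsFrom (a ++ [MStep.E] ++ b) h = clsFrom (MStep.E :: a ++ b) h := by
  simp [clsFrom_append, clsFrom]

lemma cls_eq_of_MCover {P Q : List MStep} (h : MCover P Q) : cls P = cls Q := by
  obtain ⟨P₁, P₂, P₃, -, -, rfl, rfl⟩ := h
  simp only [cls, List.append_assoc, clsFrom_append P₁]
  rw [← List.append_assoc P₂, clsFrom_append_E_comm]
  rfl

theorem cls_eq_of_MLE_general (P Q : List MStep)
    (h : MLE P Q) : cls P = cls Q := by
  simpa [Relation.reflTransGen_eq_self] using
    h.lift cls fun _ _ hc => cls_eq_of_MCover hc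

/-- If `P ≤_M Q` for Motzkin paths `P, Q` of the same size `n`,
then `P` and `Q` have the same class, i.e. the same sequence of heights of
their diagonal steps. -/
theorem cls_eq_of_MLE (n : ℕ) (P Q : List MStep)
    (hP : IsMotzkin P) (hQ : IsMotzkin Q)
    (hPn : P.length = n) (hQn : Q.length = n)
    (h : MLE P Q) : cls P = cls Q :=
  cls_eq_of_MLE_general P Q h
end

section
/- The map φ, which replaces in a Dyck path each maximal run of north steps together with the immediately following east step as follows — each factor NE (isolated north step followed by an east step) is replaced by a single diagonal step D, and each factor NNE (a run of two north steps followed by an east step) is replaced by a single north step N, leaving all remaining east steps unchanged — is a bijection from the set of Dyck paths avoiding three consecutive north steps NNN onto the set of Motzkin paths. Its inverse replaces each D by NE and each N by NNE. -/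
/-!
Reading a Dyck path without `NNN` and not ending in `N` as a word in the blocks `NNE`, `NE`, `E`
shows that it lies in the image of `ψ`, which substitutes these blocks for `N`, `D`, `E`.
A prefix of `ψ P` is `ψ q` for a prefix `q` of `P`, followed by a proper prefix of a block; such
a piece has nonnegative height, so the prefix is at least as high as `q`, while `ψ q` has the
same height as `q`. Hence `ψ P` is a Motzkin path exactly when `P` is.
-/

open MStep

lemma List.prefix_append_cases {α : Type*} {q a b : List α} (h : q <+: a ++ b) :
    q <+: a ∨ ∃ s, q = a ++ s ∧ s <+: b := by
  obtain ⟨t, ht⟩ := h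
  rcases List.append_eq_append_iff.mp ht with ⟨s, rfl, -⟩ | ⟨s, rfl, hb⟩
  · exact .inl ⟨s, rfl⟩
  · exact .inr ⟨s, rfl, t, hb.symm⟩

lemma wsum_cons (a : MStep) (l : List MStep) : wsum (a :: l) = a.hdiff + wsum l := by
  simp [wsum]

lemma wsum_append (a b : List MStep) : wsum (a ++ b) = wsum a + wsum b := by
  simp [wsum]

lemma phi_E_cons (r : List MStep) : phi (E :: r) = E :: phi r := by
  cases r with
  | nil => rfl
  | cons a l => cases a <;> rfl

lemma phi_psi : ∀ P : List MStep, phi (psi P) = P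
  | [] => rfl
  | N :: p => congrArg (N :: ·) (phi_psi p)
  | D :: p => congrArg (D :: ·) (phi_psi p)
  | E :: p => (phi_E_cons _).trans (congrArg (E :: ·) (phi_psi p))

lemma psi_cons (x : MStep) (p : List MStep) : psi (x :: p) = psi [x] ++ psi p := by
  cases x <;> rfl

lemma psi_append (p q : List MStep) : psi (p ++ q) = psi p ++ psi q := by
  induction p with
  | nil => rfl
  | cons x p ih => rw [List.cons_append, psi_cons, ih, psi_cons x p, List.append_assoc]

lemma psi_eq_nil_iff {P : List MStep} : psi P = [] ↔ P = [] := by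
  cases P with
  | nil => simp [psi]
  | cons x p => cases x <;> simp [psi]

lemma wsum_psi (P : List MStep) : wsum (psi P) = wsum P := by
  induction P with
  | nil => rfl
  | cons x p ih => cases x <;> simp [psi, wsum_cons, ih, hdiff]

lemma D_not_mem_psi (P : List MStep) : D ∉ psi P := by
  induction P with
  | nil => simp [psi]
  | cons x p ih => cases x <;> simp [psi, ih]

lemma avoidsNNN_psi (P : List MStep) : AvoidsNNN (psi P) := by
  induction P with
  | nil => simp [AvoidsNNN, psi]
  | cons x p ih =>
    simp only [AvoidsNNN] at ih ⊢
    cases x <;> simp [psi, List.infix_cons_iff, ih]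

lemma wsum_nonneg_or_eq_of_prefix_psi_singleton (x : MStep) {q : List MStep}
    (hq : q <+: psi [x]) : 0 ≤ wsum q ∨ q = psi [x] := by
  rw [← List.mem_inits] at hq
  revert q
  cases x <;> decide

lemma exists_prefix_wsum_le_of_prefix_psi {P q : List MStep} (hq : q <+: psi P) :
    ∃ q', q' <+: P ∧ wsum q' ≤ wsum q := by
  induction P generalizing q with
  | nil => exact ⟨[], List.nil_prefix, by simp [psi] at hq; simp [hq]⟩
  | cons x p ih =>
    rw [psi_cons] at hq
    rcases List.prefix_append_cases hq with hq | ⟨s, rfl, hs⟩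
    · rcases wsum_nonneg_or_eq_of_prefix_psi_singleton x hq with hq | rfl
      · exact ⟨[], List.nil_prefix, hq⟩
      · exact ⟨[x], List.cons_prefix_cons.mpr ⟨rfl, List.nil_prefix⟩, (wsum_psi [x]).ge⟩
    · obtain ⟨s', hs', hle⟩ := ih hs
      refine ⟨x :: s', List.cons_prefix_cons.mpr ⟨rfl, hs'⟩, ?_⟩
      rw [← List.singleton_append, wsum_append, wsum_append, wsum_psi]
      linarith

lemma isMotzkin_psi_iff {P : List MStep} : IsMotzkin (psi P) ↔ IsMotzkin P := by
  have hprefix : (∀ q, q <+: psi P → 0 ≤ wsum q) ↔ ∀ q, q <+: P → 0 ≤ wsum q := by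
    refine ⟨fun h q hq => ?_, fun h q hq => ?_⟩
    · obtain ⟨t, rfl⟩ := hq
      simpa [wsum_psi] using h (psi q) ⟨psi t, (psi_append q t).symm⟩
    · obtain ⟨q', hq', hle⟩ := exists_prefix_wsum_le_of_prefix_psi hq
      exact (h q' hq').trans hle
  simp only [IsMotzkin, ne_eq, psi_eq_nil_iff, hprefix, wsum_psi]

lemma AvoidsNNN.of_cons {a : MStep} {r : List MStep} (h : AvoidsNNN (a :: r)) : AvoidsNNN r :=
  fun hr => h (hr.trans (List.suffix_cons a r).isInfix)

lemma psi_phi_of_getLast?_ne : ∀ R : List MStep, D ∉ R → AvoidsNNN R →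
    R.getLast? ≠ some N → psi (phi R) = R
  | [], _, _, _ => rfl
  | D :: _, hD, _, _ => absurd List.mem_cons_self hD
  | E :: r, hD, hA, hL => by
    rw [phi_E_cons, psi]
    congr 1
    refine psi_phi_of_getLast?_ne r (fun h => hD (.tail _ h)) hA.of_cons ?_
    cases r <;> simp_all
  | [N], _, _, hL => absurd rfl hL
  | N :: D :: _, hD, _, _ => absurd (.tail _ List.mem_cons_self) hD
  | N :: E :: r, hD, hA, hL => by
    rw [phi, psi]
    congr 2
    refine psi_phi_of_getLast?_ne r (fun h => hD (.tail _ (.tail _ h))) hA.of_cons.of_cons ?_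
    cases r <;> simp_all
  | [N, N], _, _, hL => absurd rfl hL
  | N :: N :: N :: r, _, hA, _ => absurd ⟨[], r, rfl⟩ hA
  | N :: N :: D :: _, hD, _, _ => absurd (.tail _ (.tail _ List.mem_cons_self)) hD
  | N :: N :: E :: r, hD, hA, hL => by
    rw [phi, psi]
    congr 3
    refine psi_phi_of_getLast?_ne r (fun h => hD (.tail _ (.tail _ (.tail _ h))))
      hA.of_cons.of_cons.of_cons ?_
    cases r <;> simp_all

lemma IsDyck.getLast?_ne {R : List MStep} (h : IsDyck R) : R.getLast? ≠ some N := by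
  intro hL
  obtain ⟨R', rfl⟩ := List.getLast?_eq_some_iff.mp hL
  obtain ⟨⟨-, hpre, hsum⟩, -⟩ := h
  have := hpre R' (List.prefix_append R' [N])
  rw [wsum_append, show wsum [N] = 1 from rfl] at hsum
  linarith

lemma IsDyck.psi_phi {R : List MStep} (h : IsDyck R) (hA : AvoidsNNN R) : psi (phi R) = R :=
  psi_phi_of_getLast?_ne R h.2 hA h.getLast?_ne

/-- `φ` is a bijection from the set of Dyck paths avoiding
`NNN` onto the set of Motzkin paths, with inverse `ψ` (replacing each `D` by
`NE` and each `N` by `NNE`). -/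
theorem phi_bijection :
    Set.BijOn phi {R | IsDyck R ∧ AvoidsNNN R} {P | IsMotzkin P} ∧
    (∀ R : List MStep, IsDyck R → AvoidsNNN R → psi (phi R) = R) ∧
    (∀ P : List MStep, IsMotzkin P → phi (psi P) = P) := by
  have hinv : Set.InvOn psi phi {R | IsDyck R ∧ AvoidsNNN R} {P | IsMotzkin P} :=
    ⟨fun R hR => hR.1.psi_phi hR.2, fun P _ => phi_psi P⟩
  have hphi : Set.MapsTo phi {R | IsDyck R ∧ AvoidsNNN R} {P | IsMotzkin P} := by
    intro R ⟨hR, hA⟩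
    show IsMotzkin (phi R)
    rw [← isMotzkin_psi_iff, hR.psi_phi hA]
    exact hR.1
  have hpsi : Set.MapsTo psi {P | IsMotzkin P} {R | IsDyck R ∧ AvoidsNNN R} :=
    fun P hP => ⟨⟨isMotzkin_psi_iff.mpr hP, D_not_mem_psi P⟩, avoidsNNN_psi P⟩
  exact ⟨hinv.bijOn hphi hpsi, fun R hR hA => hR.psi_phi hA, fun P _ => phi_psi P⟩
end

section
/- Let S = N·S₁·E·S₂ be a Dyck path, where each of S₁ and S₂ is either empty or a Dyck path. Then S avoids three consecutive north steps NNN if and only if: each of S₁ and S₂ is either empty or avoids NNN, and moreover if S₁ is nonempty then S₁ starts with the two steps NE. -/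
/-! An occurrence of `NNN` cannot straddle an east step, so `N·S₁·E·S₂` avoids `NNN` iff `S₁` and
`S₂` do and the leading `N` does not extend an initial `NN` of `S₁`. A nonempty Dyck path starts
with `N` followed by a second step that is not `D`, so `S₁` avoids starting with `NN` exactly when
it starts with `NE`. -/

theorem List.infix_or_infix_of_infix_append_cons {α : Type*} {l a b : List α} {x : α}
    (hx : x ∉ l) (h : l <:+: a ++ x :: b) : l <:+: a ∨ l <:+: b := by
  rcases List.infix_append_iff.1 h with ha | hxb | ⟨l₁, l₂, rfl, hl₁, hl₂⟩
  · exact Or.inl ha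
  · rcases List.infix_cons_iff.1 hxb with hp | hb
    · rcases List.prefix_cons_iff.1 hp with rfl | ⟨t, rfl, -⟩
      · exact Or.inl List.nil_infix
      · exact absurd List.mem_cons_self hx
    · exact Or.inr hb
  · rcases List.prefix_cons_iff.1 hl₂ with rfl | ⟨t, rfl, -⟩
    · exact Or.inl (by simpa using hl₁.isInfix)
    · exact absurd (List.mem_append_right l₁ List.mem_cons_self) hx

theorem avoidsNNN_nil : AvoidsNNN [] := by
  simp [AvoidsNNN]

theorem avoidsNNN_append_E_cons_iff (a b : List MStep) :
    AvoidsNNN (a ++ MStep.E :: b) ↔ AvoidsNNN a ∧ AvoidsNNN b := by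
  refine ⟨fun h => ⟨fun ha => h ?_, fun hb => h ?_⟩, fun ⟨ha, hb⟩ h => ?_⟩
  · exact ha.trans List.infix_append_left
  · exact hb.trans (List.infix_append_of_infix_right (List.infix_cons List.infix_rfl))
  · exact (List.infix_or_infix_of_infix_append_cons (by simp) h).elim ha hb

theorem avoidsNNN_N_cons_iff (p : List MStep) :
    AvoidsNNN (MStep.N :: p) ↔ AvoidsNNN p ∧ ¬ [MStep.N, MStep.N] <+: p := by
  simp [AvoidsNNN, List.infix_cons_iff, and_comm]

theorem IsDyck.exists_eq_N_cons_cons {S : List MStep} (hS : IsDyck S) :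
    ∃ x t, x ≠ MStep.D ∧ S = MStep.N :: x :: t := by
  obtain ⟨⟨hne, hpre, hsum⟩, hD⟩ := hS
  obtain ⟨y, s, rfl⟩ := List.exists_cons_of_ne_nil hne
  have hy : 0 ≤ wsum [y] := hpre [y] (List.prefix_cons_inj y |>.2 List.nil_prefix)
  obtain rfl : y = MStep.N := by
    cases y <;> simp_all [wsum, MStep.hdiff]
  obtain ⟨x, t, rfl⟩ : ∃ x t, s = x :: t := by
    cases s <;> simp_all [wsum, MStep.hdiff]
  exact ⟨x, t, fun h => hD (h ▸ by simp), rfl⟩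

theorem avoidsNNN_decomposition_general (S₁ S₂ : List MStep)
    (h₁ : S₁ = [] ∨ IsDyck S₁) :
    AvoidsNNN ([MStep.N] ++ S₁ ++ [MStep.E] ++ S₂) ↔
      ((S₁ = [] ∨ AvoidsNNN S₁) ∧ (S₂ = [] ∨ AvoidsNNN S₂) ∧
        (S₁ ≠ [] → [MStep.N, MStep.E] <+: S₁)) := by
  have hnil (S : List MStep) : S = [] ∨ AvoidsNNN S ↔ AvoidsNNN S :=
    or_iff_right_of_imp (by rintro rfl; exact avoidsNNN_nil)
  have hNN : ¬ [MStep.N, MStep.N] <+: S₁ ++ MStep.E :: S₂ ↔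
      (S₁ ≠ [] → [MStep.N, MStep.E] <+: S₁) := by
    rcases h₁ with rfl | hS₁
    · simp
    · obtain ⟨x, t, hx, rfl⟩ := hS₁.exists_eq_N_cons_cons
      cases x <;> simp_all
  rw [hnil, hnil, ← hNN, ← and_assoc, ← avoidsNNN_append_E_cons_iff, ← avoidsNNN_N_cons_iff]
  simp

/-- Let `S = N·S₁·E·S₂` be a Dyck path, with `S₁, S₂` each
either empty or a Dyck path. Then `S` avoids `NNN` iff each of `S₁` and `S₂`
is either empty or avoids `NNN`, and if `S₁` is nonempty then it starts with
the two steps `NE`. -/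
theorem avoidsNNN_decomposition (S₁ S₂ : List MStep)
    (h₁ : S₁ = [] ∨ IsDyck S₁) (h₂ : S₂ = [] ∨ IsDyck S₂) :
    AvoidsNNN ([MStep.N] ++ S₁ ++ [MStep.E] ++ S₂) ↔
      ((S₁ = [] ∨ AvoidsNNN S₁) ∧ (S₂ = [] ∨ AvoidsNNN S₂) ∧
        (S₁ ≠ [] → [MStep.N, MStep.E] <+: S₁)) :=
  avoidsNNN_decomposition_general S₁ S₂ h₁
end

section
/- Let R be a Dyck path avoiding three consecutive north steps NNN. Then the number of diagonal steps of the Motzkin path φ(R) equals ds(R), the number of north steps of R that are neither immediately preceded nor immediately followed by another north step. -/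
/-!
A Dyck path avoiding `NNN` cannot end in `N`, so it factors uniquely into the blocks `E`, `NE`
and `NNE`, which `φ` sends to `E`, `D` and `N`. Every block ends in `E`, so `ds` is additive
over this factorization, and among the blocks only `NE` has `ds = 1`.
-/

section

open MStep

def IsIsolatedN (p : List MStep) (i : ℕ) : Prop :=
  p[i]? = some N ∧ p[i + 1]? ≠ some N ∧ (i = 0 ∨ p[i - 1]? ≠ some N)

instance (p : List MStep) : DecidablePred (IsIsolatedN p) := fun _ => by
  unfold IsIsolatedN; infer_instance

theorem ds_eq_card_isIsolatedN (p : List MStep) :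
    ds p = ((Finset.range p.length).filter (IsIsolatedN p)).card := rfl

theorem isIsolatedN_append_left {l : List MStep} (p : List MStep) (hl : l.getLast? ≠ some N)
    {i : ℕ} (hi : i < l.length) : IsIsolatedN (l ++ p) i ↔ IsIsolatedN l i := by
  unfold IsIsolatedN
  rw [List.getElem?_append_left hi, List.getElem?_append_left (by omega : i - 1 < l.length)]
  rcases Nat.lt_or_ge (i + 1) l.length with h | h
  · rw [List.getElem?_append_left h]
  · have hlast : l[i]? = l.getLast? := by
      rw [List.getLast?_eq_getElem?]; congr 1; omega
    rw [hlast]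
    simp [hl]

theorem isIsolatedN_append_right {l : List MStep} (p : List MStep) (hl : l.getLast? ≠ some N)
    (i : ℕ) : IsIsolatedN (l ++ p) (l.length + i) ↔ IsIsolatedN p i := by
  unfold IsIsolatedN
  rw [List.getElem?_append_right (by omega), List.getElem?_append_right (by omega)]
  simp only [Nat.add_sub_cancel_left, show l.length + i + 1 - l.length = i + 1 by omega]
  rcases i with _ | i
  · have : l = [] ∨ (l ++ p)[l.length - 1]? ≠ some N := by
      rcases l.eq_nil_or_concat with rfl | ⟨l', x, rfl⟩
      · simp
      · simp_all
    simp [this]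
  · rw [List.getElem?_append_right (by omega)]
    simp only [show l.length + (i + 1) - 1 - l.length = i by omega]
    simp

theorem ds_append {l : List MStep} (p : List MStep) (hl : l.getLast? ≠ some N) :
    ds (l ++ p) = ds l + ds p := by
  simp only [ds_eq_card_isIsolatedN, Finset.card_filter, List.length_append, Finset.sum_range_add]
  congr 1
  · refine Finset.sum_congr rfl fun i hi => ?_
    rw [Finset.mem_range] at hi
    simp only [isIsolatedN_append_left p hl hi]
  · simp only [isIsolatedN_append_right p hl]

theorem AvoidsNNN.of_append {l p : List MStep} (h : AvoidsNNN (l ++ p)) : AvoidsNNN p :=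
  fun hp => h (hp.trans (List.suffix_append l p).isInfix)

theorem IsMotzkin.not_suffix_N {p : List MStep} (hp : IsMotzkin p) : ¬ [N] <:+ p := by
  rintro ⟨q, rfl⟩
  obtain ⟨-, hprefix, hsum⟩ := hp
  have hq : 0 ≤ wsum q := hprefix q (List.prefix_append q [N])
  simp [wsum, hdiff] at hsum hq
  omega

theorem count_D_phi_eq_ds (p : List MStep) (hD : D ∉ p) (hA : AvoidsNNN p) (hL : ¬ [N] <:+ p) :
    (phi p).count D = ds p := by
  induction p using phi.induct with
  | case1 => rfl
  | case2 rest ih =>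
    have := ih (by simp_all) (hA.of_append (l := [N, N, E]))
      (fun h => hL (h.trans (List.suffix_append [N, N, E] rest)))
    rw [show N :: N :: E :: rest = [N, N, E] ++ rest from rfl, ds_append _ (by decide)]
    simp [phi, this, show ds [N, N, E] = 0 by decide]
  | case3 rest ih =>
    have := ih (by simp_all) (hA.of_append (l := [N, E]))
      (fun h => hL (h.trans (List.suffix_append [N, E] rest)))
    rw [show N :: E :: rest = [N, E] ++ rest from rfl, ds_append _ (by decide)]
    simp [phi, this, show ds [N, E] = 1 by decide, add_comm]
  | case4 s rest hNNE hNE ih =>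
    cases s with
    | E =>
      have := ih (by simp_all) (hA.of_append (l := [E]))
        (fun h => hL (h.trans (List.suffix_append [E] rest)))
      rw [show E :: rest = [E] ++ rest from rfl, ds_append _ (by decide)]
      simp [phi, this, show ds [E] = 0 by decide]
    | D => simp at hD
    | N =>
      match rest, hNNE, hNE with
      | [], _, _ => exact absurd List.suffix_rfl hL
      | E :: _, _, hNE => exact absurd rfl (hNE _ rfl)
      | D :: _, _, _ => simp at hD
      | [N], _, _ => exact absurd (List.suffix_cons _ _) hL
      | N :: E :: _, hNNE, _ => exact absurd rfl (hNNE _ rfl)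
      | N :: D :: _, _, _ => simp at hD
      | N :: N :: _, _, _ => exact absurd (List.prefix_append _ _).isInfix hA

end

/-- For a Dyck path `R` avoiding `NNN`, the number of
diagonal steps of the Motzkin path `φ R` equals `ds R`, the number of north
steps of `R` neither immediately preceded nor immediately followed by another
north step. -/
theorem phi_count_diagonal (R : List MStep) (hR : IsDyck R) (hRa : AvoidsNNN R) :
    (phi R).count MStep.D = ds R :=
  count_D_phi_eq_ds R hR.2 hRa hR.1.not_suffix_N
end
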